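/- arXiv:1409.6453 — 4 statements merged into one kernel-verified Lean document; each statement's English description precedes it below -/
import Mathlib

section
/- Let u_0 : ℝ → ℝ be smooth and bounded with bounded derivatives, satisfying u_0'' + u_0 - u_0³ = 0. Then for every v ∈ H²(ℝ), ⟨K_-(2) v, v⟩_{L²} = ‖L_- v‖²_{L²} + ‖u_0 v' - u_0' v‖²_{L²}, where L_- v = -v'' + (u_0² - 1) v and ⟨K_-(2)v,v⟩ = ∫_ℝ [v''² + (3u_0² - 2) v'² + (1 - u_0²) v²] dx. -/
open MeasureTheory Set Filter

private lemma l2mul {f g : ℝ → ℝ} (hf : MemLp f 2 volume) (hg : MemLp g 2 volume) :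
    Integrable (fun x => f x * g x) volume := by
  refine Integrable.mono' ((hf.integrable_sq.add hg.integrable_sq).div_const 2)
    (hf.aestronglyMeasurable.mul hg.aestronglyMeasurable) ?_
  filter_upwards with x
  rw [Real.norm_eq_abs, abs_mul]
  simp only [Pi.add_apply]
  nlinarith [sq_abs (f x), sq_abs (g x), sq_nonneg (|f x| - |g x|),
    abs_nonneg (f x), abs_nonneg (g x)]

private lemma integral_hasDerivAt_eq_zero {F G : ℝ → ℝ}
    (hd : ∀ x, HasDerivAt F (G x) x) (hF : Integrable F (volume : Measure ℝ))
    (hG : Integrable G (volume : Measure ℝ)) : ∫ x, G x = 0 := by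
  have h1 : Tendsto F atTop (nhds 0) :=
    tendsto_zero_of_hasDerivAt_of_integrableOn_Ioi (a := 0) (fun x _ => hd x)
      hG.integrableOn hF.integrableOn
  have h2 : Tendsto F atBot (nhds 0) :=
    tendsto_zero_of_hasDerivAt_of_integrableOn_Iic (a := 0) (fun x _ => hd x)
      hG.integrableOn hF.integrableOn
  have e1 : ∫ x in Ioi (0:ℝ), G x = 0 - F 0 :=
    integral_Ioi_of_hasDerivAt_of_tendsto' (fun x _ => hd x) hG.integrableOn h1
  have e2 : ∫ x in Iic (0:ℝ), G x = F 0 - 0 :=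
    integral_Iic_of_hasDerivAt_of_tendsto' (fun x _ => hd x) hG.integrableOn h2
  rw [← intervalIntegral.integral_Iic_add_Ioi (b := (0:ℝ)) hG.integrableOn hG.integrableOn, e1, e2]
  ring

theorem stmt5 (u0 : ℝ → ℝ) (hu0 : ContDiff ℝ (⊤ : ℕ∞) u0)
    (hbdd : ∃ M : ℝ, ∀ x : ℝ, |u0 x| ≤ M ∧ |deriv u0 x| ≤ M)
    (heq : ∀ x : ℝ, deriv (deriv u0) x + u0 x - (u0 x)^3 = 0)
    (v : ℝ → ℝ) (hv : ContDiff ℝ 2 v)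
    (hv0 : MemLp v 2 volume) (hv1 : MemLp (deriv v) 2 volume)
    (hv2 : MemLp (deriv (deriv v)) 2 volume) :
    ∫ x : ℝ, ((deriv (deriv v) x)^2 + (3*(u0 x)^2 - 2)*(deriv v x)^2
        + (1 - (u0 x)^2)*(v x)^2)
    = (∫ x : ℝ, (-(deriv (deriv v) x) + ((u0 x)^2 - 1) * v x)^2)
      + ∫ x : ℝ, (u0 x * deriv v x - deriv u0 x * v x)^2 := by
  obtain ⟨M, hM⟩ := hbdd
  have hMnn : 0 ≤ M := le_trans (abs_nonneg _) (hM 0).1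
  -- smoothness facts
  have hud : Differentiable ℝ u0 := hu0.differentiable (by simp)
  have hduc := (contDiff_infty_iff_deriv.mp (hu0.of_le (by simp))).2
  have hdud : Differentiable ℝ (deriv u0) := hduc.differentiable (by simp)
  have huC : Continuous u0 := hu0.continuous
  have hduC : Continuous (deriv u0) := hduc.continuous
  have hvd : Differentiable ℝ v := hv.differentiable two_ne_zero
  have hdv1 : ContDiff ℝ 1 (deriv v) := by
    have h := (contDiff_succ_iff_deriv (n := 1)).mp (by exact_mod_cast hv)
    exact h.2.2
  have hdvd : Differentiable ℝ (deriv v) := hdv1.differentiable one_ne_zero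
  have hvC : Continuous v := hv.continuous
  have hdvC : Continuous (deriv v) := hdv1.continuous
  -- pointwise bounds
  have husq : ∀ x, (u0 x)^2 ≤ M^2 := by
    intro x
    have h := (hM x).1
    nlinarith [sq_abs (u0 x), abs_nonneg (u0 x)]
  have hdusq : ∀ x, (deriv u0 x)^2 ≤ M^2 := by
    intro x
    have h := (hM x).2
    nlinarith [sq_abs (deriv u0 x), abs_nonneg (deriv u0 x)]
  -- MemLp of coefficient-multiplied functions
  have mem1 : MemLp (fun x => (u0 x^2 - 1) * v x) 2 volume := by
    refine hv0.of_le_mul (c := M^2 + 1)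
      ((huC.pow 2).sub continuous_const |>.mul hvC).aestronglyMeasurable ?_
    filter_upwards with x
    simp only [Real.norm_eq_abs, abs_mul]
    have h1 := husq x
    have h2 : |u0 x ^ 2 - 1| ≤ M^2 + 1 := by
      rw [abs_le]; constructor <;> nlinarith [sq_nonneg (u0 x)]
    exact mul_le_mul_of_nonneg_right h2 (abs_nonneg _)
  have mem2 : MemLp (fun x => u0 x * deriv v x) 2 volume := by
    refine hv1.of_le_mul (c := M) (huC.mul hdvC).aestronglyMeasurable ?_
    filter_upwards with x
    simp only [Real.norm_eq_abs, abs_mul]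
    exact mul_le_mul_of_nonneg_right (hM x).1 (abs_nonneg _)
  have mem3 : MemLp (fun x => deriv u0 x * v x) 2 volume := by
    refine hv0.of_le_mul (c := M) (hduC.mul hvC).aestronglyMeasurable ?_
    filter_upwards with x
    simp only [Real.norm_eq_abs, abs_mul]
    exact mul_le_mul_of_nonneg_right (hM x).2 (abs_nonneg _)
  -- integrability of the three integrands
  have iR1 : Integrable (fun x => (-(deriv (deriv v) x) + ((u0 x)^2 - 1) * v x)^2) volume := by
    have := (hv2.neg.add mem1).integrable_sq
    simpa using this
  have iR2 : Integrable (fun x => (u0 x * deriv v x - deriv u0 x * v x)^2) volume := by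
    have := (mem2.sub mem3).integrable_sq
    simpa using this
  have iL1 : Integrable (fun x => (deriv (deriv v) x)^2) volume := hv2.integrable_sq
  have iL2 : Integrable (fun x => (3*(u0 x)^2 - 2)*(deriv v x)^2) volume := by
    refine Integrable.bdd_mul hv1.integrable_sq
      ((continuous_const.mul (huC.pow 2)).sub continuous_const).aestronglyMeasurable
      (c := 3*M^2 + 2) (Filter.Eventually.of_forall fun x => ?_)
    rw [Real.norm_eq_abs, abs_le]
    have := husq x
    constructor <;> nlinarith [sq_nonneg (u0 x)]
  have iL3 : Integrable (fun x => (1 - (u0 x)^2)*(v x)^2) volume := by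
    refine Integrable.bdd_mul hv0.integrable_sq
      (continuous_const.sub (huC.pow 2)).aestronglyMeasurable
      (c := M^2 + 1) (Filter.Eventually.of_forall fun x => ?_)
    rw [Real.norm_eq_abs, abs_le]
    have := husq x
    constructor <;> nlinarith [sq_nonneg (u0 x)]
  have iL : Integrable (fun x => (deriv (deriv v) x)^2 + (3*(u0 x)^2 - 2)*(deriv v x)^2
      + (1 - (u0 x)^2)*(v x)^2) volume := (iL1.add iL2).add iL3
  -- the boundary function F and its derivative
  set F : ℝ → ℝ := fun x =>
    (2*(u0 x * u0 x - 1)) * (v x * deriv v x) - (u0 x * deriv u0 x) * (v x * v x) with hFdef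
  set G : ℝ → ℝ := fun x =>
    ((deriv (deriv v) x)^2 + (3*(u0 x)^2 - 2)*(deriv v x)^2 + (1 - (u0 x)^2)*(v x)^2)
    - (-(deriv (deriv v) x) + ((u0 x)^2 - 1) * v x)^2
    - (u0 x * deriv v x - deriv u0 x * v x)^2 with hGdef
  have hFint : Integrable F volume := by
    refine Integrable.sub ?_ ?_
    · exact Integrable.bdd_mul (l2mul hv0 hv1)
        (continuous_const.mul ((huC.mul huC).sub continuous_const)).aestronglyMeasurable
        (c := 2*(M^2+1)) (Filter.Eventually.of_forall fun x => by
          rw [Real.norm_eq_abs, abs_le]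
          have := husq x
          constructor <;> nlinarith [sq_nonneg (u0 x)])
    · exact Integrable.bdd_mul (l2mul hv0 hv0)
        (huC.mul hduC).aestronglyMeasurable
        (c := M^2) (Filter.Eventually.of_forall fun x => by
          rw [Real.norm_eq_abs, abs_mul]
          have h1 := (hM x).1
          have h2 := (hM x).2
          nlinarith [abs_nonneg (u0 x), abs_nonneg (deriv u0 x)])
  have hGint : Integrable G volume := (iL.sub iR1).sub iR2
  have hFderiv : ∀ x, HasDerivAt F (G x) x := by
    intro x
    have hu : HasDerivAt u0 (deriv u0 x) x := (hud x).hasDerivAt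
    have hdu : HasDerivAt (deriv u0) (deriv (deriv u0) x) x := (hdud x).hasDerivAt
    have hvx : HasDerivAt v (deriv v x) x := (hvd x).hasDerivAt
    have hdvx : HasDerivAt (deriv v) (deriv (deriv v) x) x := (hdvd x).hasDerivAt
    have H := ((((hu.mul hu).sub_const 1).const_mul 2).mul (hvx.mul hdvx)).sub
      ((hu.mul hdu).mul (hvx.mul hvx))
    have hddu : deriv (deriv u0) x = (u0 x)^3 - u0 x := by
      have := heq x; linarith
    refine H.congr_deriv ?_
    simp only [hGdef, hddu, Pi.mul_apply]
    ring
  have key : ∫ x, G x = 0 := integral_hasDerivAt_eq_zero hFderiv hFint hGint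
  calc ∫ x : ℝ, ((deriv (deriv v) x)^2 + (3*(u0 x)^2 - 2)*(deriv v x)^2
        + (1 - (u0 x)^2)*(v x)^2)
      = ∫ x : ℝ, (((-(deriv (deriv v) x) + ((u0 x)^2 - 1) * v x)^2
          + (u0 x * deriv v x - deriv u0 x * v x)^2) + G x) := by
        congr 1
        funext x
        simp only [hGdef]
        ring
    _ = (∫ x : ℝ, ((-(deriv (deriv v) x) + ((u0 x)^2 - 1) * v x)^2
          + (u0 x * deriv v x - deriv u0 x * v x)^2)) + ∫ x, G x :=
        integral_add (iR1.add iR2) hGint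
    _ = ((∫ x : ℝ, (-(deriv (deriv v) x) + ((u0 x)^2 - 1) * v x)^2)
          + ∫ x : ℝ, (u0 x * deriv v x - deriv u0 x * v x)^2) + ∫ x, G x := by
        rw [integral_add iR1 iR2]
    _ = (∫ x : ℝ, (-(deriv (deriv v) x) + ((u0 x)^2 - 1) * v x)^2)
          + ∫ x : ℝ, (u0 x * deriv v x - deriv u0 x * v x)^2 := by
        rw [key, add_zero]
end

section
/- Let L_+ = -d²/dx² + 3u_0² - 1 and M_+ = d⁴/dx⁴ - 5 d/dx (u_0² d/dx) - 5u_0⁴ + 15u_0² - 4 + 3𝓔², where u_0 satisfies u_0'' + u_0 - u_0³ = 0 with invariant 2(u_0')² = (1-u_0²)² - 𝓔². Then L_+ u_0' = 0 and M_+ u_0' = 0. -/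
theorem stmt9 (𝓔 : ℝ) (u0 : ℝ → ℝ) (hu0 : ContDiff ℝ (⊤ : ℕ∞) u0)
    (heq : ∀ x : ℝ, deriv (deriv u0) x + u0 x - (u0 x)^3 = 0)
    (hinv : ∀ x : ℝ, 2*(deriv u0 x)^2 = (1-(u0 x)^2)^2 - 𝓔^2) :
    (∀ x : ℝ, -(deriv (deriv (deriv u0)) x) + (3*(u0 x)^2 - 1) * deriv u0 x = 0) ∧
    (∀ x : ℝ, deriv^[4] (deriv u0) x
        - 5 * deriv (fun y => (u0 y)^2 * deriv (deriv u0) y) x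
        + (-5*(u0 x)^4 + 15*(u0 x)^2 - 4 + 3*𝓔^2) * deriv u0 x = 0) := by
  have hd0 : Differentiable ℝ u0 := hu0.differentiable (by simp)
  have hi : ContDiff ℝ ((⊤ : ℕ∞) : WithTop ℕ∞) u0 := hu0.of_le (by simp)
  have hc1 : ContDiff ℝ ((⊤ : ℕ∞) : WithTop ℕ∞) (deriv u0) := (contDiff_infty_iff_deriv.mp hi).2
  have hd1 : Differentiable ℝ (deriv u0) := hc1.differentiable (by simp)
  have hc2 : ContDiff ℝ ((⊤ : ℕ∞) : WithTop ℕ∞) (deriv (deriv u0)) := (contDiff_infty_iff_deriv.mp hc1).2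
  have hd2 : Differentiable ℝ (deriv (deriv u0)) := hc2.differentiable (by simp)
  have H0 : ∀ x, HasDerivAt u0 (deriv u0 x) x := fun x => (hd0 x).hasDerivAt
  have H1 : ∀ x, HasDerivAt (deriv u0) (deriv (deriv u0) x) x := fun x => (hd1 x).hasDerivAt
  have H2 : ∀ x, HasDerivAt (deriv (deriv u0)) (deriv (deriv (deriv u0)) x) x :=
    fun x => (hd2 x).hasDerivAt
  have e2 : deriv (deriv u0) = fun x => u0 x ^ 3 - u0 x := by
    funext x; have := heq x; linarith
  have e3 : deriv (deriv (deriv u0)) = fun x => (3 * (u0 x)^2 - 1) * deriv u0 x := by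
    rw [e2]; funext x
    have h : deriv (fun x => u0 x ^ 3 - u0 x) x = _ := (((H0 x).pow 3).sub (H0 x)).deriv
    rw [h]; push_cast; ring
  have e4 : deriv (deriv (deriv (deriv u0))) =
      fun x => 6 * u0 x * (deriv u0 x)^2 + (3 * (u0 x)^2 - 1) * ((u0 x)^3 - u0 x) := by
    rw [e3]; funext x
    have h : deriv (fun x => (3 * u0 x ^ 2 - 1) * deriv u0 x) x = _ :=
      (((((H0 x).pow 2).const_mul 3).sub_const 1).mul (H1 x)).deriv
    rw [h, congrFun e2 x]; simp only [Pi.pow_apply, Pi.sub_apply]; push_cast; ring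
  have e5 : deriv (deriv (deriv (deriv (deriv u0)))) =
      fun x => 6 * (deriv u0 x)^3 + 18 * u0 x * deriv u0 x * ((u0 x)^3 - u0 x)
        + (3 * (u0 x)^2 - 1)^2 * deriv u0 x := by
    rw [e4]; funext x
    have h : deriv (fun x => 6 * u0 x * deriv u0 x ^ 2 + (3 * u0 x ^ 2 - 1) * (u0 x ^ 3 - u0 x)) x = _ := (((((H0 x).const_mul 6).mul ((H1 x).pow 2))).add
      (((((H0 x).pow 2).const_mul 3).sub_const 1).mul (((H0 x).pow 3).sub (H0 x)))).deriv
    rw [h, congrFun e2 x]; simp only [Pi.pow_apply, Pi.sub_apply]; push_cast; ring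
  constructor
  · intro x
    rw [congrFun e3 x]; ring
  · intro x
    have hprod : deriv (fun y => (u0 y)^2 * deriv (deriv u0) y) x
        = 2 * u0 x * deriv u0 x * deriv (deriv u0) x
          + (u0 x)^2 * deriv (deriv (deriv u0)) x := by
      have h : deriv (fun y => u0 y ^ 2 * deriv (deriv u0) y) x = _ := (((H0 x).pow 2).mul (H2 x)).deriv
      rw [h]; simp only [Pi.pow_apply]; push_cast; ring
    have h4 : deriv^[4] (deriv u0) x = deriv (deriv (deriv (deriv (deriv u0)))) x := by
      simp [Function.iterate_succ_apply, Function.iterate_zero_apply]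
    rw [h4, congrFun e5 x, hprod, congrFun e2 x, congrFun e3 x]
    linear_combination 3 * deriv u0 x * hinv x
end

section
/- For k ∈ (0,1) let j(ξ) = sn(ξ,k), and define V(ξ) = cn(ξ,k)·dn(ξ,k) + sn(ξ,k)·[E(ξ,k) - (E(k)/K(k))·ξ], where E(ξ,k) = ∫₀^ξ dn²(y,k) dy, and K(k), E(k) are the complete elliptic integrals. Then with 𝓛_- = -∂_ξ² - (1+k²) + 2k² j², one has 𝓛_- V = -2(1 - E(k)/K(k)) j' pointwise on ℝ. -/
/-!
Write `j = sn`, `W ξ = E(ξ,k) - c ξ` with `c = E(k)/K(k)`, and `𝓛_- = -∂² + p` with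
`p = 2k² sn² - (1 + k²)`, so that `V = j' + j W`. The identities `cn² = 1 - sn²`,
`dn² = 1 - k² sn²` turn the derivative of `j' = cn dn` into `j'' = p j`, i.e. `𝓛_- j = 0`,
and differentiating once more gives `j''' = (p + 4k² sn²) j'`. Hence
`𝓛_- V = -4k² sn² j' - 2 j' W' - j W''`, and `W' = dn² - c`, `W'' = -2k² sn j'`
collapse this to `-2(1 - c) j'`.
-/

theorem deriv_deriv_eq_of_hasDerivAt {f f' f'' : ℝ → ℝ} (hf : ∀ x, HasDerivAt f (f' x) x)
    (hf' : ∀ x, HasDerivAt f' (f'' x) x) (x : ℝ) : deriv (deriv f) x = f'' x := by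
  rw [show deriv f = f' from funext fun y => (hf y).deriv]
  exact (hf' x).deriv

theorem deriv_deriv_add_mul {u s w u' s' w' u'' s'' w'' : ℝ → ℝ}
    (hu : ∀ x, HasDerivAt u (u' x) x) (hu' : ∀ x, HasDerivAt u' (u'' x) x)
    (hs : ∀ x, HasDerivAt s (s' x) x) (hs' : ∀ x, HasDerivAt s' (s'' x) x)
    (hw : ∀ x, HasDerivAt w (w' x) x) (hw' : ∀ x, HasDerivAt w' (w'' x) x) (x : ℝ) :
    deriv (deriv fun x => u x + s x * w x) x
      = u'' x + s'' x * w x + 2 * (s' x * w' x) + s x * w'' x := by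
  refine deriv_deriv_eq_of_hasDerivAt (fun y => (hu y).add ((hs y).mul (hw y)))
    (fun y => ((hu' y).add (((hs' y).mul (hw y)).add ((hs y).mul (hw' y))))) x |>.trans ?_
  ring

theorem hasDerivAt_integral_sub_mul {f : ℝ → ℝ} (hf : Continuous f) (a c x : ℝ) :
    HasDerivAt (fun x => (∫ y in a..x, f y) - c * x) (f x - c) x := by
  exact ((hf.integral_hasStrictDerivAt a x).hasDerivAt.sub
    ((hasDerivAt_id x).const_mul c)).congr_deriv (by ring)

section Jacobi

variable {k : ℝ} {sn cn dn : ℝ → ℝ}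

theorem hasDerivAt_cn_mul_dn (hcn : ∀ ξ, HasDerivAt cn (-(sn ξ * dn ξ)) ξ)
    (hdn : ∀ ξ, HasDerivAt dn (-(k ^ 2 * sn ξ * cn ξ)) ξ)
    (hdn2 : ∀ ξ, dn ξ ^ 2 = 1 - k ^ 2 * sn ξ ^ 2) (hcn2 : ∀ ξ, cn ξ ^ 2 = 1 - sn ξ ^ 2)
    (ξ : ℝ) :
    HasDerivAt (fun x => cn x * dn x) ((2 * k ^ 2 * sn ξ ^ 2 - (1 + k ^ 2)) * sn ξ) ξ := by
  refine ((hcn ξ).mul (hdn ξ)).congr_deriv ?_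
  linear_combination (-sn ξ) * hdn2 ξ - k ^ 2 * sn ξ * hcn2 ξ

theorem hasDerivAt_sn_second_deriv (hsn : ∀ ξ, HasDerivAt sn (cn ξ * dn ξ) ξ) (ξ : ℝ) :
    HasDerivAt (fun x => (2 * k ^ 2 * sn x ^ 2 - (1 + k ^ 2)) * sn x)
      ((6 * k ^ 2 * sn ξ ^ 2 - (1 + k ^ 2)) * (cn ξ * dn ξ)) ξ := by
  have hp := (((hsn ξ).fun_pow 2).const_mul (2 * k ^ 2)).sub_const (1 + k ^ 2)
  refine (hp.mul (hsn ξ)).congr_deriv ?_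
  ring

theorem hasDerivAt_dn_sq (hdn : ∀ ξ, HasDerivAt dn (-(k ^ 2 * sn ξ * cn ξ)) ξ) (c ξ : ℝ) :
    HasDerivAt (fun x => dn x ^ 2 - c) (-2 * k ^ 2 * sn ξ * (cn ξ * dn ξ)) ξ := by
  refine (((hdn ξ).fun_pow 2).sub_const c).congr_deriv ?_
  ring

end Jacobi

theorem stmt13_general (k : ℝ)
    (sn cn dn : ℝ → ℝ)
    (hsn : ∀ ξ : ℝ, HasDerivAt sn (cn ξ * dn ξ) ξ)
    (hcn : ∀ ξ : ℝ, HasDerivAt cn (-(sn ξ * dn ξ)) ξ)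
    (hdn : ∀ ξ : ℝ, HasDerivAt dn (-(k^2 * sn ξ * cn ξ)) ξ)
    (hdn2 : ∀ ξ : ℝ, (dn ξ)^2 = 1 - k^2*(sn ξ)^2)
    (hcn2 : ∀ ξ : ℝ, (cn ξ)^2 = 1 - (sn ξ)^2)
    (K E : ℝ)
    (V : ℝ → ℝ)
    (hV : ∀ ξ : ℝ, V ξ = cn ξ * dn ξ
        + sn ξ * ((∫ y in (0:ℝ)..ξ, (dn y)^2) - (E/K) * ξ)) :
    ∀ ξ : ℝ, -(deriv (deriv V) ξ) + (-(1+k^2) + 2*k^2*(sn ξ)^2) * V ξ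
      = -2 * (1 - E/K) * (cn ξ * dn ξ) := by
  intro ξ
  have hdn_sq_cont : Continuous fun y => dn y ^ 2 :=
    (continuous_iff_continuousAt.2 fun y => (hdn y).continuousAt).pow 2
  have hV'' := deriv_deriv_add_mul (hasDerivAt_cn_mul_dn hcn hdn hdn2 hcn2)
    (hasDerivAt_sn_second_deriv hsn) hsn (hasDerivAt_cn_mul_dn hcn hdn hdn2 hcn2)
    (hasDerivAt_integral_sub_mul hdn_sq_cont 0 (E / K)) (hasDerivAt_dn_sq hdn (E / K)) ξ
  rw [hV ξ, show V = _ from funext hV, hV'']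
  linear_combination (-2 * (cn ξ * dn ξ)) * hdn2 ξ

theorem stmt13 (k : ℝ) (hk : k ∈ Set.Ioo (0:ℝ) 1)
    (sn cn dn : ℝ → ℝ)
    (hsn : ∀ ξ : ℝ, HasDerivAt sn (cn ξ * dn ξ) ξ)
    (hcn : ∀ ξ : ℝ, HasDerivAt cn (-(sn ξ * dn ξ)) ξ)
    (hdn : ∀ ξ : ℝ, HasDerivAt dn (-(k^2 * sn ξ * cn ξ)) ξ)
    (hsn0 : sn 0 = 0) (hcn0 : cn 0 = 1) (hdn0 : dn 0 = 1)
    (hdn2 : ∀ ξ : ℝ, (dn ξ)^2 = 1 - k^2*(sn ξ)^2)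
    (hcn2 : ∀ ξ : ℝ, (cn ξ)^2 = 1 - (sn ξ)^2)
    (K E : ℝ)
    (hK : K = ∫ θ in (0:ℝ)..(Real.pi/2), 1 / Real.sqrt (1 - k^2 * Real.sin θ ^ 2))
    (hE : E = ∫ θ in (0:ℝ)..(Real.pi/2), Real.sqrt (1 - k^2 * Real.sin θ ^ 2))
    (V : ℝ → ℝ)
    (hV : ∀ ξ : ℝ, V ξ = cn ξ * dn ξ
        + sn ξ * ((∫ y in (0:ℝ)..ξ, (dn y)^2) - (E/K) * ξ)) :
    ∀ ξ : ℝ, -(deriv (deriv V) ξ) + (-(1+k^2) + 2*k^2*(sn ξ)^2) * V ξ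
      = -2 * (1 - E/K) * (cn ξ * dn ξ) :=
  stmt13_general k sn cn dn hsn hcn hdn hdn2 hcn2 K E V hV
end

section
/- With the notation of the previous statement, the three identities hold pointwise: 𝓛_-(cn·dn) = -4k² cn·dn·sn², 𝓛_-(sn·E(·,k)) = -2 cn·dn·(1 - 2k² sn²), and 𝓛_-(ξ·sn) = -2 cn·dn, where 𝓛_- = -∂_ξ² - (1+k²) + 2k² sn². -/
/-- The operator `𝓛₋ = -∂_ξ² - (1+k²) + 2k² sn²`. -/
noncomputable def Lm14 (k : ℝ) (sn g : ℝ → ℝ) : ℝ → ℝ :=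
  fun ξ => -(deriv (deriv g) ξ) + (-(1+k^2) + 2*k^2*(sn ξ)^2) * g ξ

theorem Lm14_eq_of_hasDerivAt {k : ℝ} {sn g g' : ℝ → ℝ} {g'' ξ : ℝ}
    (hg : ∀ t, HasDerivAt g (g' t) t) (hg' : HasDerivAt g' g'' ξ) :
    Lm14 k sn g ξ = -g'' + (-(1+k^2) + 2*k^2*(sn ξ)^2) * g ξ := by
  rw [Lm14, funext fun t => (hg t).deriv, hg'.deriv]

structure IsJacobiTriple (k : ℝ) (sn cn dn : ℝ → ℝ) : Prop where
  hasDerivAt_sn (ξ : ℝ) : HasDerivAt sn (cn ξ * dn ξ) ξ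
  hasDerivAt_cn (ξ : ℝ) : HasDerivAt cn (-(sn ξ * dn ξ)) ξ
  hasDerivAt_dn (ξ : ℝ) : HasDerivAt dn (-(k^2 * sn ξ * cn ξ)) ξ
  dn_sq (ξ : ℝ) : (dn ξ)^2 = 1 - k^2*(sn ξ)^2
  cn_sq (ξ : ℝ) : (cn ξ)^2 = 1 - (sn ξ)^2

namespace IsJacobiTriple

variable {k : ℝ} {sn cn dn : ℝ → ℝ}

theorem Lm14_cn_mul_dn (h : IsJacobiTriple k sn cn dn) (ξ : ℝ) :
    Lm14 k sn (fun t => cn t * dn t) ξ = -4*k^2 * (cn ξ * dn ξ * (sn ξ)^2) := by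
  have hsn := h.hasDerivAt_sn; have hcn := h.hasDerivAt_cn; have hdn := h.hasDerivAt_dn
  rw [Lm14_eq_of_hasDerivAt (fun t => (hcn t).fun_mul (hdn t))
    ((((hsn ξ).fun_mul (hdn ξ)).fun_neg.fun_mul (hdn ξ)).add
      ((hcn ξ).fun_mul (((hsn ξ).const_mul (k^2)).fun_mul (hcn ξ)).neg))]
  linear_combination (cn ξ * dn ξ) * h.dn_sq ξ + k^2 * (cn ξ * dn ξ) * h.cn_sq ξ

theorem Lm14_sn_mul_integral_dn_sq (h : IsJacobiTriple k sn cn dn) (ξ : ℝ) :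
    Lm14 k sn (fun t => sn t * ∫ y in (0:ℝ)..t, (dn y)^2) ξ
      = -2 * (cn ξ * dn ξ) * (1 - 2*k^2*(sn ξ)^2) := by
  have hsn := h.hasDerivAt_sn; have hcn := h.hasDerivAt_cn; have hdn := h.hasDerivAt_dn
  have hE (t : ℝ) : HasDerivAt (fun t => ∫ y in (0:ℝ)..t, (dn y)^2) ((dn t)^2) t :=
    ((continuous_iff_continuousAt.2 fun y => (hdn y).continuousAt).pow 2
      |>.integral_hasStrictDerivAt 0 t).hasDerivAt
  rw [Lm14_eq_of_hasDerivAt (fun t => (hsn t).fun_mul (hE t))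
    ((((hcn ξ).fun_mul (hdn ξ)).fun_mul (hE ξ)).add ((hsn ξ).fun_mul ((hdn ξ).pow 2)))]
  linear_combination (sn ξ * (∫ y in (0:ℝ)..ξ, (dn y)^2) - 2*cn ξ*dn ξ) * h.dn_sq ξ
    + k^2 * sn ξ * (∫ y in (0:ℝ)..ξ, (dn y)^2) * h.cn_sq ξ

theorem Lm14_id_mul_sn (h : IsJacobiTriple k sn cn dn) (ξ : ℝ) :
    Lm14 k sn (fun t => t * sn t) ξ = -2 * (cn ξ * dn ξ) := by
  have hsn := h.hasDerivAt_sn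
  rw [Lm14_eq_of_hasDerivAt (fun t => (hasDerivAt_id' t).fun_mul (hsn t))
    ((hsn ξ).const_mul 1 |>.add
      ((hasDerivAt_id' ξ).fun_mul ((h.hasDerivAt_cn ξ).fun_mul (h.hasDerivAt_dn ξ))))]
  linear_combination ξ * sn ξ * h.dn_sq ξ + k^2 * ξ * sn ξ * h.cn_sq ξ

end IsJacobiTriple

theorem stmt14_general (k : ℝ)
    (sn cn dn : ℝ → ℝ)
    (hsn : ∀ ξ : ℝ, HasDerivAt sn (cn ξ * dn ξ) ξ)
    (hcn : ∀ ξ : ℝ, HasDerivAt cn (-(sn ξ * dn ξ)) ξ)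
    (hdn : ∀ ξ : ℝ, HasDerivAt dn (-(k^2 * sn ξ * cn ξ)) ξ)
    (hdn2 : ∀ ξ : ℝ, (dn ξ)^2 = 1 - k^2*(sn ξ)^2)
    (hcn2 : ∀ ξ : ℝ, (cn ξ)^2 = 1 - (sn ξ)^2) :
    (∀ ξ : ℝ, Lm14 k sn (fun t => cn t * dn t) ξ
        = -4*k^2 * (cn ξ * dn ξ * (sn ξ)^2)) ∧
    (∀ ξ : ℝ, Lm14 k sn (fun t => sn t * ∫ y in (0:ℝ)..t, (dn y)^2) ξ
        = -2 * (cn ξ * dn ξ) * (1 - 2*k^2*(sn ξ)^2)) ∧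
    (∀ ξ : ℝ, Lm14 k sn (fun t => t * sn t) ξ = -2 * (cn ξ * dn ξ)) :=
  have h : IsJacobiTriple k sn cn dn := ⟨hsn, hcn, hdn, hdn2, hcn2⟩
  ⟨h.Lm14_cn_mul_dn, h.Lm14_sn_mul_integral_dn_sq, h.Lm14_id_mul_sn⟩

theorem stmt14 (k : ℝ) (hk : k ∈ Set.Ioo (0:ℝ) 1)
    (sn cn dn : ℝ → ℝ)
    (hsn : ∀ ξ : ℝ, HasDerivAt sn (cn ξ * dn ξ) ξ)
    (hcn : ∀ ξ : ℝ, HasDerivAt cn (-(sn ξ * dn ξ)) ξ)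
    (hdn : ∀ ξ : ℝ, HasDerivAt dn (-(k^2 * sn ξ * cn ξ)) ξ)
    (hsn0 : sn 0 = 0) (hcn0 : cn 0 = 1) (hdn0 : dn 0 = 1)
    (hdn2 : ∀ ξ : ℝ, (dn ξ)^2 = 1 - k^2*(sn ξ)^2)
    (hcn2 : ∀ ξ : ℝ, (cn ξ)^2 = 1 - (sn ξ)^2) :
    (∀ ξ : ℝ, Lm14 k sn (fun t => cn t * dn t) ξ
        = -4*k^2 * (cn ξ * dn ξ * (sn ξ)^2)) ∧
    (∀ ξ : ℝ, Lm14 k sn (fun t => sn t * ∫ y in (0:ℝ)..t, (dn y)^2) ξ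
        = -2 * (cn ξ * dn ξ) * (1 - 2*k^2*(sn ξ)^2)) ∧
    (∀ ξ : ℝ, Lm14 k sn (fun t => t * sn t) ξ = -2 * (cn ξ * dn ξ)) :=
  stmt14_general k sn cn dn hsn hcn hdn hdn2 hcn2
end
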